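/- Theorem (Grabisch–Labreuche): For independent Uniform[0,1] inputs Z_1,…,Z_m, the nonnormalized Sobol' index of a nonempty subset A ⊆ C for the multilinear model F_ML of a capacity μ is Var[(F_ML)_A] = (1/3^{|A|}) (μ̂(A))², where μ̂(A) = (−1/2)^{|A|} I^B(A) is the Fourier transform of μ. -/

import Mathlib

open Finset MeasureTheory

/-- The multilinear model of a capacity. -/
def FML {m : ℕ} (μ : Finset (Fin m) → ℝ) (v : Fin m → ℝ) : ℝ :=
  ∑ A : Finset (Fin m), μ A * (∏ j ∈ A, v j) * (∏ j ∈ Aᶜ, (1 - v j))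

/-- A capacity: normalized monotone set function. -/
def IsCapacity {m : ℕ} (μ : Finset (Fin m) → ℝ) : Prop :=
  μ ∅ = 0 ∧ μ univ = 1 ∧ ∀ A B : Finset (Fin m), A ⊆ B → μ A ≤ μ B

/-- The Banzhaf interaction index of a set function. -/
noncomputable def IB {m : ℕ} (μ : Finset (Fin m) → ℝ) (A : Finset (Fin m)) : ℝ :=
  (1 / 2 ^ (m - A.card)) *
    ∑ D ∈ Aᶜ.powerset, ∑ D' ∈ A.powerset, (-1 : ℝ) ^ (A.card - D'.card) * μ (D' ∪ D)

/-- The joint law of `m` independent Uniform[0,1] random variables. -/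
noncomputable def unifPi (m : ℕ) : Measure (Fin m → ℝ) :=
  Measure.pi fun _ => volume.restrict (Set.Icc (0 : ℝ) 1)

/-- Conditional expectation of `f` given the coordinates in `D` (for independent
Uniform[0,1] inputs): integrate out the remaining coordinates. -/
noncomputable def condE {m : ℕ} (D : Finset (Fin m)) (f : (Fin m → ℝ) → ℝ)
    (v : Fin m → ℝ) : ℝ :=
  ∫ w, f (fun j => if j ∈ D then v j else w j) ∂(unifPi m)

/-- The HDMR component of `f` associated with the subset `A`. -/
noncomputable def hdmr {m : ℕ} (A : Finset (Fin m)) (f : (Fin m → ℝ) → ℝ)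
    (v : Fin m → ℝ) : ℝ :=
  ∑ D ∈ A.powerset, (-1 : ℝ) ^ (A \ D).card * condE D f v

/-- Variance with respect to the uniform product law. -/
noncomputable def varUnif {m : ℕ} (g : (Fin m → ℝ) → ℝ) : ℝ :=
  ∫ v, (g v - ∫ w, g w ∂(unifPi m)) ^ 2 ∂(unifPi m)

/-! Substituting `v = 1/2 + x` expands the multilinear model in the centered monomials
`∏_{j ∈ T} (v_j - 1/2)`, and the coefficient of the monomial of `T` is the Banzhaf index `I^B(T)`.
Integrating out the coordinates outside `D` kills every monomial not contained in `D`, since each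
centered factor has mean zero; Möbius inversion over the subsets of `A` then leaves the single
term `I^B(A) ∏_{j ∈ A} (v_j - 1/2)` as the HDMR component of `A`. A centered Uniform[0,1]
variable has variance `1/12 = (1/3) (-1/2)^2`, which gives the variance of that term. -/

section FinsetSums

variable {ι : Type*} [Fintype ι] [DecidableEq ι]

theorem prod_add_mul_prod_compl_sub {R : Type*} [CommRing R] (B : Finset ι) (c : R) (x : ι → R) :
    (∏ j ∈ B, (c + x j)) * ∏ j ∈ Bᶜ, (c - x j) =
      ∑ T, (-1) ^ #(T \ B) * c ^ #Tᶜ * ∏ j ∈ T, x j := by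
  have sign_prod : ∀ T : Finset ι, ∏ j ∈ T, (if j ∈ B then (1 : R) else -1) = (-1) ^ #(T \ B) :=
    fun T => by rw [prod_ite, prod_const_one, prod_const, one_mul, sdiff_eq_filter]
  calc (∏ j ∈ B, (c + x j)) * ∏ j ∈ Bᶜ, (c - x j)
      = ∏ j, ((if j ∈ B then 1 else -1) * x j + c) := by
        rw [← prod_mul_prod_compl B]
        congr 1 <;> refine prod_congr rfl fun j hj => ?_
        · rw [if_pos hj]; ring
        · rw [if_neg (mem_compl.1 hj)]; ring
    _ = ∑ T, (∏ j ∈ T, (if j ∈ B then 1 else -1) * x j) * ∏ j ∈ Tᶜ, c := Fintype.prod_add _ _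
    _ = ∑ T, (-1) ^ #(T \ B) * c ^ #Tᶜ * ∏ j ∈ T, x j := by
        simp only [prod_mul_distrib, sign_prod, prod_const]
        exact sum_congr rfl fun T _ => by ring

theorem sum_powerset_compl_sum_powerset {M : Type*} [AddCommMonoid M] (T : Finset ι)
    (f : Finset ι → Finset ι → M) :
    ∑ D ∈ Tᶜ.powerset, ∑ D' ∈ T.powerset, f D' D = ∑ B, f (B ∩ T) (B \ T) := by
  have split : ∀ D D', D ⊆ Tᶜ → D' ⊆ T → (D' ∪ D) \ T = D ∧ (D' ∪ D) ∩ T = D' := by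
    intro D D' hD hD'
    rw [subset_compl_iff_disjoint_right] at hD
    rw [union_sdiff_distrib, sdiff_eq_empty_iff_subset.2 hD', hD.sdiff_eq_left, empty_union,
      union_inter_distrib_right, inter_eq_left.2 hD', disjoint_iff_inter_eq_empty.1 hD, union_empty]
    exact ⟨rfl, rfl⟩
  rw [← sum_product']
  refine sum_nbij' (fun p => p.2 ∪ p.1) (fun B => (B \ T, B ∩ T)) ?_ ?_ ?_ ?_ ?_
  · simp
  · intro B _
    simpa [subset_compl_iff_disjoint_right] using disjoint_sdiff_self_left
  · rintro ⟨D, D'⟩ h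
    simp only [mem_product, mem_powerset] at h
    simp [split D D' h.1 h.2]
  · intro B _
    exact (union_comm _ _).trans (sdiff_union_inter B T)
  · rintro ⟨D, D'⟩ h
    simp only [mem_product, mem_powerset] at h
    simp [split D D' h.1 h.2]

theorem sum_powerset_filter_superset_neg_one_pow {α R : Type*} [DecidableEq α] [Ring R]
    (A T : Finset α) :
    ∑ D ∈ A.powerset with T ⊆ D, (-1 : R) ^ #(A \ D) = if T = A then 1 else 0 := by
  by_cases hTA : T ⊆ A
  · have complement : ∑ D ∈ A.powerset with T ⊆ D, (-1 : R) ^ #(A \ D) =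
        ∑ E ∈ (A \ T).powerset, (-1 : R) ^ #E := by
      refine sum_nbij' (A \ ·) (A \ ·) ?_ ?_ ?_ ?_ fun _ _ => rfl
      · intro D hD
        rw [mem_filter, mem_powerset] at hD
        exact mem_powerset.2 (sdiff_subset_sdiff subset_rfl hD.2)
      · intro E hE
        rw [mem_powerset] at hE
        exact mem_filter.2 ⟨mem_powerset.2 sdiff_subset,
          subset_sdiff.2 ⟨hTA, disjoint_of_subset_right hE disjoint_sdiff⟩⟩
      · intro D hD
        exact Finset.sdiff_sdiff_eq_self (mem_powerset.1 (mem_filter.1 hD).1)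
      · intro E hE
        exact Finset.sdiff_sdiff_eq_self ((mem_powerset.1 hE).trans sdiff_subset)
    have alternating := congrArg (Int.cast : ℤ → R) (sum_powerset_neg_one_pow_card (x := A \ T))
    push_cast at alternating
    rw [complement, alternating]
    exact if_congr (sdiff_eq_empty_iff_subset.trans ⟨subset_antisymm hTA, fun h => h ▸ subset_rfl⟩)
      rfl rfl
  · rw [filter_false_of_mem fun D hD hTD => hTA (hTD.trans (mem_powerset.1 hD)), sum_empty,
      if_neg fun h => hTA h.subset]

end FinsetSums

theorem IB_eq_sum {m : ℕ} (μ : Finset (Fin m) → ℝ) (T : Finset (Fin m)) :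
    IB μ T = (1 / 2) ^ #Tᶜ * ∑ B, (-1) ^ #(T \ B) * μ B := by
  rw [IB, sum_powerset_compl_sum_powerset T fun D' D => (-1) ^ (#T - #D') * μ (D' ∪ D),
    card_compl, Fintype.card_fin, one_div_pow]
  congr 1
  refine sum_congr rfl fun B _ => ?_
  rw [← card_sdiff, union_comm, sdiff_union_inter]

noncomputable def centeredMonomial {ι : Type*} (T : Finset ι) (v : ι → ℝ) : ℝ :=
  ∏ j ∈ T, (v j - 1 / 2)

theorem FML_eq_sum_IB_mul_centeredMonomial {m : ℕ} (μ : Finset (Fin m) → ℝ) (v : Fin m → ℝ) :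
    FML μ v = ∑ T, IB μ T * centeredMonomial T v := by
  have expand : ∀ B : Finset (Fin m), (∏ j ∈ B, v j) * ∏ j ∈ Bᶜ, (1 - v j) =
      ∑ T, (-1) ^ #(T \ B) * (1 / 2) ^ #Tᶜ * centeredMonomial T v := by
    intro B
    simp only [centeredMonomial]
    rw [← prod_add_mul_prod_compl_sub B (1 / 2) fun j => v j - 1 / 2]
    congr 1 <;> exact prod_congr rfl fun j _ => by ring
  simp only [FML, mul_assoc, expand, IB_eq_sum, mul_sum, sum_mul]
  rw [sum_comm]
  exact sum_congr rfl fun T _ => sum_congr rfl fun B _ => by ring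

section ProductMeasure

variable {ι E 𝕜 : Type*} [Fintype ι] [DecidableEq ι] [MeasurableSpace E] [RCLike 𝕜]
  {ν : Measure E} [IsProbabilityMeasure ν]

theorem integral_finset_prod_pi (T : Finset ι) (f : ι → E → 𝕜) :
    ∫ w, ∏ j ∈ T, f j (w j) ∂(Measure.pi fun _ => ν) = ∏ j ∈ T, ∫ t, f j t ∂ν := by
  simp_rw [← Fintype.prod_ite_mem T]
  rw [integral_fintype_prod_eq_prod fun j t => if j ∈ T then f j t else 1]
  refine prod_congr rfl fun j _ => ?_
  split_ifs <;> simp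

theorem integrable_finset_prod_pi (T : Finset ι) {f : ι → E → 𝕜} (hf : ∀ j, Integrable (f j) ν) :
    Integrable (fun w => ∏ j ∈ T, f j (w j)) (Measure.pi fun _ => ν) := by
  simp_rw [← Fintype.prod_ite_mem T]
  refine Integrable.fintype_prod (f := fun j t => if j ∈ T then f j t else 1) fun j => ?_
  split_ifs
  exacts [hf j, integrable_const 1]

end ProductMeasure

noncomputable def unif01 : Measure ℝ := volume.restrict (Set.Icc 0 1)

instance : IsProbabilityMeasure unif01 :=
  ⟨by simp [unif01, Real.volume_Icc]⟩

theorem unifPi_eq_pi_unif01 (m : ℕ) : unifPi m = Measure.pi fun _ => unif01 := rfl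

theorem integral_unif01 (f : ℝ → ℝ) : ∫ t, f t ∂unif01 = ∫ t in (0 : ℝ)..1, f t := by
  rw [intervalIntegral.integral_of_le zero_le_one, unif01, integral_Icc_eq_integral_Ioc]

theorem integral_unif01_sub_half : ∫ t, (t - 1 / 2) ∂unif01 = 0 := by
  rw [integral_unif01, intervalIntegral.integral_comp_sub_right fun t => t]
  norm_num [integral_id]

theorem integral_unif01_sub_half_sq : ∫ t, (t - 1 / 2) ^ 2 ∂unif01 = 1 / 12 := by
  rw [integral_unif01, intervalIntegral.integral_comp_sub_right fun t => t ^ 2, integral_pow]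
  norm_num

theorem condE_centeredMonomial {m : ℕ} (D T : Finset (Fin m)) (v : Fin m → ℝ) :
    condE D (centeredMonomial T) v = if T ⊆ D then centeredMonomial T v else 0 := by
  have factor : ∀ j, ∫ t, ((if j ∈ D then v j else t) - 1 / 2) ∂unif01 =
      if j ∈ D then v j - 1 / 2 else 0 := by
    intro j
    split_ifs
    · simp
    · exact integral_unif01_sub_half
  simp only [condE, centeredMonomial, unifPi_eq_pi_unif01]
  rw [integral_finset_prod_pi T fun j t => (if j ∈ D then v j else t) - 1 / 2]
  simp only [factor, prod_ite_zero, ← subset_iff]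

theorem integrable_centeredMonomial_piecewise {m : ℕ} (D T : Finset (Fin m)) (v : Fin m → ℝ) :
    Integrable (fun w => centeredMonomial T fun j => if j ∈ D then v j else w j) (unifPi m) := by
  simp only [centeredMonomial, unifPi_eq_pi_unif01]
  exact integrable_finset_prod_pi T (f := fun j t => (if j ∈ D then v j else t) - 1 / 2)
    fun j => Continuous.integrableOn_Icc (by split_ifs <;> fun_prop)

theorem condE_FML {m : ℕ} (μ : Finset (Fin m) → ℝ) (D : Finset (Fin m)) (v : Fin m → ℝ) :
    condE D (FML μ) v = ∑ T, IB μ T * if T ⊆ D then centeredMonomial T v else 0 := by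
  simp_rw [← condE_centeredMonomial, condE, FML_eq_sum_IB_mul_centeredMonomial]
  rw [integral_finsetSum _ fun T _ => (integrable_centeredMonomial_piecewise D T v).const_mul _]
  simp only [integral_const_mul]

theorem hdmr_FML {m : ℕ} (μ : Finset (Fin m) → ℝ) (A : Finset (Fin m)) (v : Fin m → ℝ) :
    hdmr A (FML μ) v = IB μ A * centeredMonomial A v := by
  simp only [hdmr, condE_FML, mul_sum]
  rw [sum_comm]
  calc ∑ T, ∑ D ∈ A.powerset,
        (-1) ^ #(A \ D) * (IB μ T * if T ⊆ D then centeredMonomial T v else 0)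
      = ∑ T, IB μ T * centeredMonomial T v *
          ∑ D ∈ A.powerset with T ⊆ D, (-1 : ℝ) ^ #(A \ D) := by
        simp only [sum_filter, mul_sum]
        refine sum_congr rfl fun T _ => sum_congr rfl fun D _ => ?_
        split_ifs <;> ring
    _ = IB μ A * centeredMonomial A v := by
        simp [sum_powerset_filter_superset_neg_one_pow]

theorem varUnif_const_mul_centeredMonomial {m : ℕ} {A : Finset (Fin m)} (hA : A.Nonempty)
    (c : ℝ) : varUnif (fun v => c * centeredMonomial A v) = c ^ 2 * (1 / 12) ^ #A := by
  obtain ⟨j₀, hj₀⟩ := hA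
  have mean_zero : ∫ w, centeredMonomial A w ∂unifPi m = 0 := by
    rw [unifPi_eq_pi_unif01]
    simp only [centeredMonomial]
    rw [integral_finset_prod_pi A fun _ t => t - 1 / 2]
    exact prod_eq_zero hj₀ integral_unif01_sub_half
  have second_moment : ∫ w, centeredMonomial A w ^ 2 ∂unifPi m = (1 / 12) ^ #A := by
    simp only [centeredMonomial, ← prod_pow, unifPi_eq_pi_unif01]
    rw [integral_finset_prod_pi A fun _ t => (t - 1 / 2) ^ 2, integral_unif01_sub_half_sq,
      prod_const]
  simp only [varUnif, integral_const_mul, mean_zero, mul_zero, sub_zero, mul_pow,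
    second_moment]

theorem sobol_multilinear_fourier_general {m : ℕ} (μ : Finset (Fin m) → ℝ)
    (A : Finset (Fin m)) (hA : A.Nonempty) :
    varUnif (hdmr A (FML μ)) =
      (1 / 3 ^ A.card) * ((- (1 / 2) : ℝ) ^ A.card * IB μ A) ^ 2 := by
  rw [funext (hdmr_FML μ A), varUnif_const_mul_centeredMonomial hA, mul_pow, ← pow_mul,
    mul_comm A.card, pow_mul, show (1 / 12 : ℝ) = 1 / 3 * (-(1 / 2)) ^ 2 by norm_num, mul_pow,
    one_div_pow]
  ring

/-- Grabisch–Labreuche: the nonnormalized Sobol' index of a nonempty subset `A` for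
the multilinear model equals `(1/3^|A|) (μ̂(A))²` where `μ̂(A) = (−1/2)^{|A|} I^B(A)`
is the Fourier transform of `μ`. -/
theorem sobol_multilinear_fourier {m : ℕ} (μ : Finset (Fin m) → ℝ)
    (hμ : IsCapacity μ) (A : Finset (Fin m)) (hA : A.Nonempty) :
    varUnif (hdmr A (FML μ)) =
      (1 / 3 ^ A.card) * ((- (1 / 2) : ℝ) ^ A.card * IB μ A) ^ 2 :=
  sobol_multilinear_fourier_general μ A hA
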